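/- For every path-encoding instance (G, 𝒫), the relaxed optimum equals the optimal dual value: L^C = sup{ D(α) : α dual feasible }. -/

import Mathlib

open scoped Classical BigOperators

/-- A path-encoding instance: a finite directed multigraph together with a
finite nonempty set of paths. A path is a nonempty finite sequence of arcs in
which the head of each arc equals the tail of the next, and a path contains
at most one arc out of any given vertex (the tails of its arcs are distinct). -/
structure PEInstance where
  V : Type
  A : Type
  [fintypeV : Fintype V]
  [fintypeA : Fintype A]
  tail : A → V
  head : A → V
  paths : Finset (List A)
  paths_nonempty : paths.Nonempty
  paths_valid : ∀ p ∈ paths, p ≠ [] ∧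
    List.Chain' (fun a b => head a = tail b) p ∧ (p.map tail).Nodup

attribute [instance] PEInstance.fintypeV PEInstance.fintypeA

namespace PEInstance

variable (I : PEInstance)

/-- The set of arcs out of a vertex. -/
noncomputable def out (v : I.V) : Finset I.A :=
  Finset.univ.filter fun a => I.tail a = v

/-- A real length assignment: Kraft's inequality holds at every vertex. -/
def KraftR (ℓ : I.A → ℝ) : Prop :=
  ∀ v : I.V, ∑ a ∈ I.out v, (2 : ℝ) ^ (-ℓ a) ≤ 1

/-- An integer length assignment: Kraft's inequality holds at every vertex. -/
def KraftZ (ℓ : I.A → ℤ) : Prop :=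
  ∀ v : I.V, ∑ a ∈ I.out v, (2 : ℝ) ^ (-ℓ a) ≤ 1

/-- The value of a real length assignment: the largest encoded path length. -/
noncomputable def valueR (ℓ : I.A → ℝ) : ℝ :=
  I.paths.sup' I.paths_nonempty fun p => (p.map ℓ).sum

/-- The value of an integer length assignment: the largest encoded path length. -/
noncomputable def valueZ (ℓ : I.A → ℤ) : ℤ :=
  I.paths.sup' I.paths_nonempty fun p => (p.map ℓ).sum

end PEInstance

namespace PEInstance

variable (I : PEInstance)

/-- A dual feasible point: a probability distribution `α` on the path set `𝒫`. -/
def DualFeasible (α : List I.A → ℝ) : Prop :=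
  (∀ p ∈ I.paths, 0 ≤ α p) ∧ ∑ p ∈ I.paths, α p = 1

/-- `w a α = ∑_{p ∈ 𝒫 : a ∈ p} α p`, the total dual weight on the arc `a`. -/
noncomputable def w (α : List I.A → ℝ) (a : I.A) : ℝ :=
  ∑ p ∈ I.paths.filter (fun p => a ∈ p), α p

/-- `W v α = ∑_{p ∈ 𝒫ᵥ} α p`, where `𝒫ᵥ` is the set of paths containing an arc
out of the vertex `v`. -/
noncomputable def W (α : List I.A → ℝ) (v : I.V) : ℝ :=
  ∑ p ∈ I.paths.filter (fun p => ∃ a ∈ I.out v, a ∈ p), α p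

/-- The dual objective
`D α = -∑_{a ∈ A : w a > 0} (w a) · log₂ (w a / W (tail a))`. -/
noncomputable def D (α : List I.A → ℝ) : ℝ :=
  -∑ a ∈ Finset.univ.filter (fun a => 0 < I.w α a),
      I.w α a * Real.logb 2 (I.w α a / I.W α (I.tail a))

end PEInstance

/-!
Weak duality is Gibbs' inequality: for a Kraft assignment `ℓ`, the numbers `2^{-ℓ a}`,
`a ∈ out v`, form a sub-probability distribution, and `log x ≤ x - 1` bounds the dual objective
`D α` by the `α`-average path length `∑ₐ w_a ℓ_a ≤ value ℓ`.

For the reverse inequality, the path-length profiles `(len_ℓ p)_{p ∈ 𝒫}` of Kraft assignments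
form a convex set (Kraft's set is convex and `ℓ ↦ len_ℓ` is linear), each of whose points has a
coordinate at least `L^C`. Separating it from the open orthant `{x | ∀ p, x_p < L^C}` yields a
probability vector `α` on `𝒫` with `L^C ≤ ∑ₐ w_a ℓ_a` for every Kraft `ℓ`. Finally, for fixed `α`
this average is pushed down to `D α + ε` by the lengths `ℓ_a = -log₂ q_a`, where `q_a` mixes the
conditional weights `w_a / W_{tail a}` with a little of the uniform distribution on `out (tail a)`.
-/

open Finset Real

theorem exists_sum_mul_separating_Iio_pi {ι : Type*} [Fintype ι] {S : Set (ι → ℝ)}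
    (hS : Convex ℝ S) {L : ℝ} (hL : ∀ x ∈ S, ∃ i, L ≤ x i) :
    ∃ (β : ι → ℝ) (u : ℝ), (∀ x : ι → ℝ, (∀ i, x i < L) → ∑ i, β i * x i < u) ∧
      ∀ x ∈ S, u ≤ ∑ i, β i * x i := by
  classical
  have hdisj : Disjoint (Set.univ.pi fun _ => Set.Iio L) S :=
    Set.disjoint_left.2 fun x hxU hxS => by
      obtain ⟨i, hi⟩ := hL x hxS
      exact (hxU i (Set.mem_univ i)).not_ge hi
  obtain ⟨f, u, hfU, hfS⟩ := geometric_hahn_banach_open (convex_pi fun _ _ => convex_Iio L)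
    (isOpen_set_pi Set.finite_univ fun _ _ => isOpen_Iio) hS hdisj
  have hf : ∀ x, f x = ∑ i, f (fun j => if i = j then 1 else 0) * x i := fun x =>
    (LinearMap.pi_apply_eq_sum_univ (f : (ι → ℝ) →ₗ[ℝ] ℝ) x).trans
      (sum_congr rfl fun i _ => mul_comm _ _)
  exact ⟨_, u, fun x hx => hf x ▸ hfU x fun i _ => hx i, fun x hx => hf x ▸ hfS x hx⟩

theorem nonneg_of_forall_lt_sum_mul_lt {ι : Type*} [Fintype ι] {β : ι → ℝ} {L u : ℝ}
    (h : ∀ x : ι → ℝ, (∀ i, x i < L) → ∑ i, β i * x i < u) (i : ι) : 0 ≤ β i := by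
  classical
  by_contra! hi
  have hc := h (fun _ => L - 1) fun _ => by linarith
  set c := ∑ j, β j * (L - 1)
  -- lowering the `i`-th coordinate of the constant point by `t` raises the sum from `c` to `u`
  set t := (u - c) / -β i
  have ht : 0 ≤ t := div_nonneg (by linarith) (by linarith)
  have hx := h (fun j => L - 1 - if j = i then t else 0) fun j => by split_ifs <;> linarith
  have hsum : ∑ j, β j * (L - 1 - if j = i then t else 0) = c - β i * t := by
    simp [c, mul_sub, sum_sub_distrib]
  have hβt : β i * t = c - u := by
    simp only [t]
    field_simp [hi.ne]
    ring
  linarith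

theorem exists_mem_stdSimplex_forall_le_sum_mul {ι : Type*} [Fintype ι] {S : Set (ι → ℝ)}
    (hS : Convex ℝ S) (hne : S.Nonempty) {L : ℝ} (hL : ∀ x ∈ S, ∃ i, L ≤ x i) :
    ∃ α ∈ stdSimplex ℝ ι, ∀ x ∈ S, L ≤ ∑ i, α i * x i := by
  obtain ⟨β, u, hβU, hβS⟩ := exists_sum_mul_separating_Iio_pi hS hL
  have hβ : ∀ i, 0 ≤ β i := nonneg_of_forall_lt_sum_mul_lt hβU
  have hlt : ∀ x ∈ S, ∀ c < L, c * ∑ i, β i < ∑ i, β i * x i := fun x hx c hc => calc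
    c * ∑ i, β i = ∑ i, β i * c := by rw [mul_sum]; exact sum_congr rfl fun i _ => mul_comm _ _
    _ < u := hβU _ fun _ => hc
    _ ≤ ∑ i, β i * x i := hβS x hx
  have hpos : 0 < ∑ i, β i := by
    obtain ⟨x, hx⟩ := hne
    refine (sum_nonneg fun i _ => hβ i).lt_of_ne fun h0 => ?_
    have hβ0 := (sum_eq_zero_iff_of_nonneg fun i _ => hβ i).1 h0.symm
    simpa [hβ0] using hlt x hx (L - 1) (by linarith)
  refine ⟨fun i => β i / ∑ j, β j,
    ⟨fun i => div_nonneg (hβ i) hpos.le, by rw [← sum_div, div_self hpos.ne']⟩,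
    fun x hx => le_of_forall_lt fun c hc => ?_⟩
  simp_rw [div_mul_eq_mul_div, ← sum_div]
  rw [lt_div_iff₀ hpos]
  exact hlt x hx c hc

theorem neg_mul_logb_div_le {w W ℓ : ℝ} (hw : 0 ≤ w) (hwW : w ≤ W) :
    -(w * logb 2 (w / W)) ≤ w * ℓ + (W * 2 ^ (-ℓ) - w) / log 2 := by
  have hlog2 : 0 < log 2 := log_pos one_lt_two
  rcases hw.eq_or_lt with rfl | hw
  · simp only [zero_mul, neg_zero, zero_add, sub_zero]
    exact div_nonneg (mul_nonneg hwW (by positivity)) hlog2.le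
  have hW := hw.trans_le hwW
  have h := log_le_sub_one_of_pos (x := W * 2 ^ (-ℓ) / w) (by positivity)
  rw [log_div (by positivity) hw.ne', log_mul hW.ne' (by positivity), log_rpow two_pos] at h
  have h' : w * (log W - log w) ≤ w * ℓ * log 2 + (W * 2 ^ (-ℓ) - w) := by
    have hx : w * (W * 2 ^ (-ℓ) / w) = W * 2 ^ (-ℓ) := mul_div_cancel₀ _ hw.ne'
    nlinarith [mul_le_mul_of_nonneg_left h hw.le]
  calc -(w * logb 2 (w / W)) = w * (log W - log w) / log 2 := by
        rw [logb, log_div hw.ne' hW.ne']; ring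
    _ ≤ (w * ℓ * log 2 + (W * 2 ^ (-ℓ) - w)) / log 2 := by gcongr
    _ = w * ℓ + (W * 2 ^ (-ℓ) - w) / log 2 := by field_simp

namespace PEInstance

variable {I : PEInstance} {α : List I.A → ℝ} {ℓ : I.A → ℝ}

lemma mem_out {a : I.A} {v : I.V} : a ∈ I.out v ↔ I.tail a = v := by
  simp [out]

lemma sum_sum_out {M : Type*} [AddCommMonoid M] (f : I.A → M) :
    ∑ v, ∑ a ∈ I.out v, f a = ∑ a, f a :=
  sum_fiberwise univ I.tail f

lemma eq_of_tail_eq {p : List I.A} (hp : p ∈ I.paths) {a b : I.A} (ha : a ∈ p) (hb : b ∈ p)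
    (h : I.tail a = I.tail b) : a = b :=
  List.inj_on_of_nodup_map (I.paths_valid p hp).2.2 ha hb h

lemma nodup_of_mem_paths {p : List I.A} (hp : p ∈ I.paths) : p.Nodup :=
  (I.paths_valid p hp).2.2.of_map _

lemma w_nonneg (hα : I.DualFeasible α) (a : I.A) : 0 ≤ I.w α a :=
  sum_nonneg fun p hp => hα.1 p (mem_filter.1 hp).1

lemma W_nonneg (hα : I.DualFeasible α) (v : I.V) : 0 ≤ I.W α v :=
  sum_nonneg fun p hp => hα.1 p (mem_filter.1 hp).1

lemma w_le_W (hα : I.DualFeasible α) (a : I.A) : I.w α a ≤ I.W α (I.tail a) := by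
  refine sum_le_sum_of_subset_of_nonneg (fun p hp => ?_) fun p hp _ => hα.1 p (mem_filter.1 hp).1
  rw [mem_filter] at hp ⊢
  exact ⟨hp.1, a, mem_out.2 rfl, hp.2⟩

lemma sum_out_w (α : List I.A → ℝ) (v : I.V) : ∑ a ∈ I.out v, I.w α a = I.W α v := by
  simp_rw [W, w, sum_filter]
  rw [sum_comm]
  refine sum_congr rfl fun p hp => ?_
  split_ifs with h
  · obtain ⟨a, ha, hap⟩ := h
    rw [sum_eq_single_of_mem a ha fun b hb hba => if_neg fun hbp =>
      hba (eq_of_tail_eq hp hbp hap ((mem_out.1 hb).trans (mem_out.1 ha).symm))]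
    exact if_pos hap
  · exact sum_eq_zero fun a ha => if_neg fun hap => h ⟨a, ha, hap⟩

lemma sum_w_mul (α : List I.A → ℝ) (ℓ : I.A → ℝ) :
    ∑ a, I.w α a * ℓ a = ∑ p ∈ I.paths, α p * (p.map ℓ).sum := by
  simp_rw [w, sum_mul, sum_filter]
  rw [sum_comm]
  refine sum_congr rfl fun p hp => ?_
  rw [← sum_filter, ← mul_sum, ← List.sum_toFinset _ (nodup_of_mem_paths hp)]
  congr 2
  ext a
  simp

lemma D_eq_neg_sum (hα : I.DualFeasible α) :
    I.D α = -∑ a, I.w α a * logb 2 (I.w α a / I.W α (I.tail a)) := by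
  rw [D, sum_filter_of_ne fun a _ h => (w_nonneg hα a).lt_of_ne' (left_ne_zero_of_mul h)]

theorem D_le_sum_w_mul (hℓ : I.KraftR ℓ) (hα : I.DualFeasible α) :
    I.D α ≤ ∑ a, I.w α a * ℓ a := by
  have hKraft : ∑ a, I.W α (I.tail a) * 2 ^ (-ℓ a) ≤ ∑ a, I.w α a := calc
    _ = ∑ v, I.W α v * ∑ a ∈ I.out v, (2 : ℝ) ^ (-ℓ a) := by
      rw [← sum_sum_out]
      refine sum_congr rfl fun v _ => ?_
      rw [mul_sum]
      exact sum_congr rfl fun a ha => by rw [mem_out.1 ha]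
    _ ≤ ∑ v, I.W α v := sum_le_sum fun v _ => mul_le_of_le_one_right (W_nonneg hα v) (hℓ v)
    _ = ∑ a, I.w α a := by simp_rw [← sum_out_w, sum_sum_out]
  calc I.D α = ∑ a, -(I.w α a * logb 2 (I.w α a / I.W α (I.tail a))) := by
        rw [D_eq_neg_sum hα, sum_neg_distrib]
    _ ≤ ∑ a, (I.w α a * ℓ a + (I.W α (I.tail a) * 2 ^ (-ℓ a) - I.w α a) / log 2) :=
        sum_le_sum fun a _ => neg_mul_logb_div_le (w_nonneg hα a) (w_le_W hα a)
    _ = ∑ a, I.w α a * ℓ a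
          + (∑ a, I.W α (I.tail a) * 2 ^ (-ℓ a) - ∑ a, I.w α a) / log 2 := by
        rw [sum_add_distrib, ← sum_div, sum_sub_distrib]
    _ ≤ ∑ a, I.w α a * ℓ a := by
        have := div_nonpos_of_nonpos_of_nonneg (sub_nonpos.2 hKraft) (log_pos one_lt_two).le
        linarith

lemma sum_mul_sum_map_le_valueR (hα : I.DualFeasible α) (ℓ : I.A → ℝ) :
    ∑ p ∈ I.paths, α p * (p.map ℓ).sum ≤ I.valueR ℓ := calc
  _ ≤ ∑ p ∈ I.paths, α p * I.valueR ℓ :=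
      sum_le_sum fun p hp => mul_le_mul_of_nonneg_left (le_sup' _ hp) (hα.1 p hp)
  _ = I.valueR ℓ := by rw [← sum_mul, hα.2, one_mul]

theorem D_le_valueR (hℓ : I.KraftR ℓ) (hα : I.DualFeasible α) : I.D α ≤ I.valueR ℓ :=
  (D_le_sum_w_mul hℓ hα).trans ((sum_w_mul α ℓ).trans_le (sum_mul_sum_map_le_valueR hα ℓ))

lemma kraftR_logb_card_out : I.KraftR fun a => logb 2 #(I.out (I.tail a)) := by
  intro v
  have hv : ∀ a ∈ I.out v, (2 : ℝ) ^ (-logb 2 #(I.out (I.tail a))) = (#(I.out v) : ℝ)⁻¹ :=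
    fun a ha => by
      rw [mem_out.1 ha, rpow_neg zero_le_two,
        rpow_logb two_pos (by norm_num) (Nat.cast_pos.2 (card_pos.2 ⟨a, ha⟩))]
  rw [sum_congr rfl hv, sum_const, nsmul_eq_mul]
  exact mul_inv_le_one

lemma dualFeasible_const_inv_card : I.DualFeasible fun _ => (#I.paths : ℝ)⁻¹ :=
  ⟨fun _ _ => by positivity, by
    rw [sum_const, nsmul_eq_mul,
      mul_inv_cancel₀ (Nat.cast_ne_zero.2 I.paths_nonempty.card_pos.ne')]⟩

lemma convex_setOf_kraftR : Convex ℝ {ℓ : I.A → ℝ | I.KraftR ℓ} := by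
  intro ℓ hℓ ℓ' hℓ' s t hs ht hst v
  calc ∑ a ∈ I.out v, (2 : ℝ) ^ (-(s • ℓ + t • ℓ') a)
      ≤ ∑ a ∈ I.out v, (s * 2 ^ (-ℓ a) + t * 2 ^ (-ℓ' a)) := sum_le_sum fun a _ => by
        have := (convexOn_rpow_left two_pos).2 (Set.mem_univ (-ℓ a)) (Set.mem_univ (-ℓ' a))
          hs ht hst
        simp only [Pi.add_apply, Pi.smul_apply, smul_eq_mul] at this ⊢
        rwa [neg_add, ← mul_neg, ← mul_neg]
    _ = s * ∑ a ∈ I.out v, (2 : ℝ) ^ (-ℓ a) + t * ∑ a ∈ I.out v, (2 : ℝ) ^ (-ℓ' a) := by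
        rw [sum_add_distrib, mul_sum, mul_sum]
    _ ≤ s * 1 + t * 1 := by gcongr; exacts [hℓ v, hℓ' v]
    _ = 1 := by rw [mul_one, mul_one, hst]

theorem exists_dualFeasible_forall_le_sum {L : ℝ} (hL : ∀ ℓ, I.KraftR ℓ → L ≤ I.valueR ℓ) :
    ∃ α, I.DualFeasible α ∧ ∀ ℓ, I.KraftR ℓ → L ≤ ∑ p ∈ I.paths, α p * (p.map ℓ).sum := by
  set len : (I.A → ℝ) → I.paths → ℝ := fun ℓ p => ((p : List I.A).map ℓ).sum
  have hlen : IsLinearMap ℝ len :=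
    ⟨fun ℓ ℓ' => by ext p; simp [len, Pi.add_def, List.sum_map_add],
     fun c ℓ => by ext p; simp [len, Pi.smul_def, List.sum_map_mul_left]⟩
  have hprofile : ∀ x ∈ len '' {ℓ | I.KraftR ℓ}, ∃ p, L ≤ x p := by
    rintro _ ⟨ℓ, hℓ, rfl⟩
    obtain ⟨p, hp, hmax⟩ := exists_mem_eq_sup' I.paths_nonempty fun p => (p.map ℓ).sum
    exact ⟨⟨p, hp⟩, (hL ℓ hℓ).trans_eq hmax⟩
  obtain ⟨β, ⟨hβ0, hβ1⟩, hβ⟩ := exists_mem_stdSimplex_forall_le_sum_mul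
    (convex_setOf_kraftR.is_linear_image hlen) ⟨_, _, kraftR_logb_card_out, rfl⟩ hprofile
  set α : List I.A → ℝ := Function.extend Subtype.val β 0
  have hαβ : ∀ p : I.paths, α p = β p := Subtype.val_injective.extend_apply β 0
  have hsum : ∀ g : List I.A → ℝ, ∑ l ∈ I.paths, α l * g l = ∑ p : I.paths, β p * g p :=
    fun g => by rw [← sum_coe_sort]; simp_rw [hαβ]
  refine ⟨α, ⟨fun l hl => hαβ ⟨l, hl⟩ ▸ hβ0 _, by
    simpa only [Pi.one_apply, mul_one, hβ1] using hsum 1⟩, fun ℓ hℓ => ?_⟩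
  rw [hsum]
  exact hβ _ ⟨ℓ, hℓ, rfl⟩

noncomputable def mixedWeight (α : List I.A → ℝ) (δ : ℝ) (a : I.A) : ℝ :=
  2 ^ (-δ) * (I.w α a / I.W α (I.tail a)) + (1 - 2 ^ (-δ)) / #(I.out (I.tail a))

lemma mixedWeight_pos (hα : I.DualFeasible α) {δ : ℝ} (hδ : 0 < δ) (a : I.A) :
    0 < I.mixedWeight α δ a := by
  have hr : (2 : ℝ) ^ (-δ) < 1 := rpow_lt_one_of_one_lt_of_neg one_lt_two (neg_neg_of_pos hδ)
  have := div_nonneg (w_nonneg hα a) (W_nonneg hα (I.tail a))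
  exact add_pos_of_nonneg_of_pos (by positivity)
    (div_pos (by linarith) (Nat.cast_pos.2 (card_pos.2 ⟨a, mem_out.2 rfl⟩)))

lemma sum_out_mixedWeight_le_one (α : List I.A → ℝ) {δ : ℝ} (hδ : 0 ≤ δ) (v : I.V) :
    ∑ a ∈ I.out v, I.mixedWeight α δ a ≤ 1 := by
  have hr : (2 : ℝ) ^ (-δ) ≤ 1 := rpow_le_one_of_one_le_of_nonpos one_le_two (neg_nonpos.2 hδ)
  have hv : ∀ a ∈ I.out v, I.mixedWeight α δ a
      = 2 ^ (-δ) / I.W α v * I.w α a + (1 - 2 ^ (-δ)) / #(I.out v) := fun a ha => by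
    rw [mixedWeight, mem_out.1 ha]
    ring
  rw [sum_congr rfl hv, sum_add_distrib, ← mul_sum, sum_out_w, sum_const, nsmul_eq_mul]
  calc 2 ^ (-δ) / I.W α v * I.W α v + #(I.out v) * ((1 - 2 ^ (-δ)) / #(I.out v))
      = 2 ^ (-δ) * (I.W α v / I.W α v) + (1 - 2 ^ (-δ)) * (#(I.out v) / #(I.out v)) := by ring
    _ ≤ 2 ^ (-δ) + (1 - 2 ^ (-δ)) :=
        add_le_add (mul_le_of_le_one_right (by positivity) (div_self_le_one _))
          (mul_le_of_le_one_right (by linarith) (div_self_le_one _))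
    _ = 1 := add_sub_cancel _ _

lemma kraftR_neg_logb_mixedWeight (hα : I.DualFeasible α) {δ : ℝ} (hδ : 0 < δ) :
    I.KraftR fun a => -logb 2 (I.mixedWeight α δ a) := fun v => by
  simp_rw [neg_neg, rpow_logb two_pos (by norm_num) (mixedWeight_pos hα hδ _)]
  exact sum_out_mixedWeight_le_one α hδ.le v

lemma w_mul_neg_logb_mixedWeight_le (hα : I.DualFeasible α) {δ : ℝ} (hδ : 0 ≤ δ) (a : I.A) :
    I.w α a * -logb 2 (I.mixedWeight α δ a)
      ≤ δ * I.w α a - I.w α a * logb 2 (I.w α a / I.W α (I.tail a)) := by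
  rcases (w_nonneg hα a).eq_or_lt with h0 | hpos
  · simp [← h0]
  have hW := hpos.trans_le (w_le_W hα a)
  have hr : (2 : ℝ) ^ (-δ) ≤ 1 := rpow_le_one_of_one_le_of_nonpos one_le_two (neg_nonpos.2 hδ)
  have hle : 2 ^ (-δ) * (I.w α a / I.W α (I.tail a)) ≤ I.mixedWeight α δ a :=
    le_add_of_nonneg_right (div_nonneg (by linarith) (Nat.cast_nonneg _))
  have := logb_le_logb_of_le one_lt_two (by positivity) hle
  rw [logb_mul (by positivity) (by positivity), logb_rpow two_pos (by norm_num)] at this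
  nlinarith [mul_le_mul_of_nonneg_left this hpos.le]

theorem exists_kraftR_sum_w_mul_le (hα : I.DualFeasible α) {ε : ℝ} (hε : 0 < ε) :
    ∃ ℓ, I.KraftR ℓ ∧ ∑ a, I.w α a * ℓ a ≤ I.D α + ε := by
  set c := ∑ a, I.w α a
  have hc : 0 ≤ c := sum_nonneg fun a _ => w_nonneg hα a
  set δ := ε / (c + 1)
  have hδ : 0 < δ := by positivity
  refine ⟨_, kraftR_neg_logb_mixedWeight hα hδ, ?_⟩
  calc ∑ a, I.w α a * -logb 2 (I.mixedWeight α δ a)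
      ≤ ∑ a, (δ * I.w α a - I.w α a * logb 2 (I.w α a / I.W α (I.tail a))) :=
        sum_le_sum fun a _ => w_mul_neg_logb_mixedWeight_le hα hδ.le a
    _ = δ * c + I.D α := by rw [sum_sub_distrib, ← mul_sum, D_eq_neg_sum hα]; ring
    _ ≤ ε + I.D α := by
        gcongr
        rw [div_mul_eq_mul_div, div_le_iff₀ (by linarith)]
        nlinarith
    _ = I.D α + ε := add_comm _ _

end PEInstance

/-- **strong duality.** For every path-encoding instance `(G, 𝒫)`,
the relaxed optimum equals the optimal dual value:
`L^C = sup { D α : α dual feasible }`. -/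
theorem strong_duality_path_encoding (I : PEInstance) :
    sInf {L : ℝ | ∃ ℓ : I.A → ℝ, I.KraftR ℓ ∧ I.valueR ℓ = L} =
      sSup {d : ℝ | ∃ α : List I.A → ℝ, I.DualFeasible α ∧ I.D α = d} := by
  set P := {L : ℝ | ∃ ℓ : I.A → ℝ, I.KraftR ℓ ∧ I.valueR ℓ = L}
  set Q := {d : ℝ | ∃ α : List I.A → ℝ, I.DualFeasible α ∧ I.D α = d}
  have hP : P.Nonempty := ⟨_, _, PEInstance.kraftR_logb_card_out, rfl⟩
  have hQ : Q.Nonempty := ⟨_, _, PEInstance.dualFeasible_const_inv_card, rfl⟩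
  have hweak : ∀ d ∈ Q, ∀ L ∈ P, d ≤ L := by
    rintro _ ⟨α, hα, rfl⟩ _ ⟨ℓ, hℓ, rfl⟩
    exact PEInstance.D_le_valueR hℓ hα
  refine le_antisymm ?_ (csSup_le hQ fun d hd => le_csInf hP (hweak d hd))
  obtain ⟨α, hα, hαP⟩ := PEInstance.exists_dualFeasible_forall_le_sum fun ℓ hℓ =>
    csInf_le ⟨_, hweak _ hQ.some_mem⟩ ⟨ℓ, hℓ, rfl⟩
  have hPα : sInf P ≤ I.D α := le_of_forall_pos_le_add fun ε hε => by
    obtain ⟨ℓ, hℓ, hcost⟩ := PEInstance.exists_kraftR_sum_w_mul_le hα hε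
    exact (hαP ℓ hℓ).trans ((PEInstance.sum_w_mul α ℓ).symm.trans_le hcost)
  exact hPα.trans (le_csSup ⟨_, fun d hd => hweak d hd _ hP.some_mem⟩ ⟨α, hα, rfl⟩)
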